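/- arXiv:1805.10782 — 3 statements merged into one kernel-verified Lean document; each statement's English description precedes it below -/
import Mathlib

section
/- Let $\{e_n\}_{n\ge 1}$ be a sequence of nonnegative reals, and let $A, B > 0$, $\beta \ge 1$, $\gamma \ge 0$. Suppose $e_1 \le B$ and for all $n \ge 2$, $e_n \le n^{-\beta}\left(A \sum_{i=1}^{n-1} (n-i)^\gamma e_i + B\right)$. Define $f(1) = 1$ and for $n \ge 2$, $f(n) = 1 + A n^\gamma \left[\prod_{j=2}^{n-1}(1 + A j^{\gamma-\beta}) + \sum_{i=2}^{n-1} i^{-\beta} \prod_{j=i+1}^{n-1}(1 + A j^{\gamma-\beta})\right]$. Then for all $n \ge 1$, $e_n \le B f(n)/n^\beta$. -/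
open Finset

lemma gronwall_key (f : ℕ → ℝ) (A β γ : ℝ)
    (hf1 : f 1 = 1)
    (hf : ∀ n, 2 ≤ n →
      f n = 1 + A * (n : ℝ) ^ γ *
        ((∏ j ∈ Finset.Icc 2 (n - 1), (1 + A * (j : ℝ) ^ (γ - β))) +
         ∑ i ∈ Finset.Icc 2 (n - 1), (i : ℝ) ^ (-β) *
           ∏ j ∈ Finset.Icc (i + 1) (n - 1), (1 + A * (j : ℝ) ^ (γ - β)))) :
    ∀ n : ℕ, 2 ≤ n →
      ∑ i ∈ Finset.Icc 1 (n - 1), f i * (i : ℝ) ^ (-β) =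
        (∏ j ∈ Finset.Icc 2 (n - 1), (1 + A * (j : ℝ) ^ (γ - β))) +
         ∑ i ∈ Finset.Icc 2 (n - 1), (i : ℝ) ^ (-β) *
           ∏ j ∈ Finset.Icc (i + 1) (n - 1), (1 + A * (j : ℝ) ^ (γ - β)) := by
  intro n hn
  induction n, hn using Nat.le_induction with
  | base => simp [hf1]
  | succ n hn ih =>
    have hb : n - 1 + 1 = n := by omega
    have hnpos : (0:ℝ) < (n:ℝ) := by positivity
    have hpow : (n:ℝ) ^ (γ - β) = (n:ℝ) ^ γ * (n:ℝ) ^ (-β) := by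
      rw [← Real.rpow_add hnpos]; ring_nf
    simp only [Nat.add_sub_cancel]
    -- split sums/products at top
    rw [← hb, Finset.sum_Icc_succ_top (by omega : 1 ≤ n - 1 + 1),
        Finset.prod_Icc_succ_top (by omega : 2 ≤ n - 1 + 1),
        Finset.sum_Icc_succ_top (by omega : 2 ≤ n - 1 + 1), hb]
    have hinner : ∀ i ∈ Finset.Icc 2 (n-1),
        (i : ℝ) ^ (-β) * ∏ j ∈ Finset.Icc (i + 1) n, (1 + A * (j : ℝ) ^ (γ - β))
        = ((i : ℝ) ^ (-β) * ∏ j ∈ Finset.Icc (i + 1) (n-1), (1 + A * (j : ℝ) ^ (γ - β)))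
            * (1 + A * (n : ℝ) ^ (γ - β)) := by
      intro i hi
      simp only [Finset.mem_Icc] at hi
      rw [← hb, Finset.prod_Icc_succ_top (by omega : i + 1 ≤ n - 1 + 1), hb]
      ring
    rw [Finset.sum_congr rfl hinner, ← Finset.sum_mul]
    have hempty : Finset.Icc (n + 1) n = ∅ := Finset.Icc_eq_empty (by omega)
    rw [hempty, Finset.prod_empty, ih, hf n hn, hpow]
    ring

theorem gronwall_type_lemma
    (e f : ℕ → ℝ) (A B β γ : ℝ)
    (hA : 0 < A) (hB : 0 < B) (hβ : 1 ≤ β) (hγ : 0 ≤ γ)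
    (he_nonneg : ∀ n, 1 ≤ n → 0 ≤ e n)
    (he1 : e 1 ≤ B)
    (hrec : ∀ n, 2 ≤ n →
      e n ≤ (n : ℝ) ^ (-β) *
        (A * ∑ i ∈ Finset.Icc 1 (n - 1), ((n : ℝ) - (i : ℝ)) ^ γ * e i + B))
    (hf1 : f 1 = 1)
    (hf : ∀ n, 2 ≤ n →
      f n = 1 + A * (n : ℝ) ^ γ *
        ((∏ j ∈ Finset.Icc 2 (n - 1), (1 + A * (j : ℝ) ^ (γ - β))) +
         ∑ i ∈ Finset.Icc 2 (n - 1), (i : ℝ) ^ (-β) *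
           ∏ j ∈ Finset.Icc (i + 1) (n - 1), (1 + A * (j : ℝ) ^ (γ - β)))) :
    ∀ n, 1 ≤ n → e n ≤ B * f n / (n : ℝ) ^ β := by
  intro n
  induction n using Nat.strong_induction_on with
  | _ n ih =>
    intro hn
    rcases eq_or_lt_of_le hn with h1 | h2
    · rw [← h1]
      simp only [Nat.cast_one, Real.one_rpow, hf1]
      simpa using he1
    · have hn2 : 2 ≤ n := h2
      have hnpos : (0:ℝ) < (n:ℝ) := by positivity
      have hTnn : ∀ i ∈ Finset.Icc 1 (n-1), ((n:ℝ) - (i:ℝ)) ^ γ * e i ≤ (n:ℝ) ^ γ * e i := by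
        intro i hi
        simp only [Finset.mem_Icc] at hi
        have h1i : (1:ℕ) ≤ i := hi.1
        have : (i:ℝ) ≤ (n:ℝ) := by exact_mod_cast (by omega : i ≤ n)
        refine mul_le_mul_of_nonneg_right ?_ (he_nonneg i h1i)
        exact Real.rpow_le_rpow (by linarith [ (by exact_mod_cast Nat.one_le_cast.mpr h1i : (1:ℝ) ≤ (i:ℝ)) ]) (by linarith) hγ
      have hstep2 : ∀ i ∈ Finset.Icc 1 (n-1), (n:ℝ) ^ γ * e i ≤ (n:ℝ)^γ * (B * (f i * (i:ℝ)^(-β))) := by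
        intro i hi
        simp only [Finset.mem_Icc] at hi
        have hib : e i ≤ B * f i / (i:ℝ)^β := ih i (by omega) hi.1
        have hipos : (0:ℝ) < (i:ℝ) := by
          have : (1:ℕ) ≤ i := hi.1; positivity
        have : B * f i / (i:ℝ)^β = B * (f i * (i:ℝ)^(-β)) := by
          rw [Real.rpow_neg (le_of_lt hipos)]; ring
        rw [← this]
        exact mul_le_mul_of_nonneg_left hib (Real.rpow_nonneg (le_of_lt hnpos) γ)
      have hsum : ∑ i ∈ Finset.Icc 1 (n-1), ((n:ℝ) - (i:ℝ)) ^ γ * e i ≤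
          (n:ℝ)^γ * (B * ∑ i ∈ Finset.Icc 1 (n-1), f i * (i:ℝ)^(-β)) := by
        calc ∑ i ∈ Finset.Icc 1 (n-1), ((n:ℝ) - (i:ℝ)) ^ γ * e i
            ≤ ∑ i ∈ Finset.Icc 1 (n-1), (n:ℝ)^γ * (B * (f i * (i:ℝ)^(-β))) :=
              Finset.sum_le_sum (fun i hi => le_trans (hTnn i hi) (hstep2 i hi))
          _ = (n:ℝ)^γ * (B * ∑ i ∈ Finset.Icc 1 (n-1), f i * (i:ℝ)^(-β)) := by
              rw [← Finset.mul_sum, ← Finset.mul_sum]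
      have hkey := gronwall_key f A β γ hf1 hf n hn2
      calc e n ≤ (n : ℝ) ^ (-β) *
            (A * ∑ i ∈ Finset.Icc 1 (n - 1), ((n : ℝ) - (i : ℝ)) ^ γ * e i + B) := hrec n hn2
        _ ≤ (n : ℝ) ^ (-β) *
            (A * ((n:ℝ)^γ * (B * ∑ i ∈ Finset.Icc 1 (n-1), f i * (i:ℝ)^(-β))) + B) := by
            apply mul_le_mul_of_nonneg_left _ (Real.rpow_nonneg (le_of_lt hnpos) _)
            have := mul_le_mul_of_nonneg_left hsum (le_of_lt hA)
            linarith
        _ = B * f n / (n:ℝ)^β := by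
            rw [hf n hn2, ← hkey, Real.rpow_neg (le_of_lt hnpos), div_eq_mul_inv]
            ring
end

section
/- Let $A > 0$ and $0 < \alpha < 1$. Define $f(n) = 1 + A n^{1-\alpha}\left[\prod_{j=2}^{n-1}\left(1+\frac{A}{j}\right) + \sum_{i=2}^{n-1} \frac{1}{i^{2-\alpha}} \prod_{j=i+1}^{n-1}\left(1+\frac{A}{j}\right)\right]$ for $n \ge 2$. Then there exists a constant $C > 0$ such that $f(n) \le C\, n^{1-\alpha+A}$ for all $n \ge 2$. -/
/-!
Since `1 + x ≤ exp x` and `∑_{j=2}^{m} 1/j ≤ log m`, every product `∏_{j=a}^{n-1} (1 + A/j)` with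
`a ≥ 2` is at most `n ^ A`. The bracket is therefore at most `(1 + ∑_i i^{-(2-α)}) n^A`, and the
series converges because `2 - α > 1`.
-/

open Real Finset

lemma sum_Icc_two_inv_le_log (m : ℕ) : ∑ j ∈ Icc 2 m, (j : ℝ)⁻¹ ≤ log m := by
  rcases Nat.eq_zero_or_pos m with rfl | hm
  · simp
  have h := harmonic_le_one_add_log m
  rw [harmonic_eq_sum_Icc, ← insert_Icc_add_one_left_eq_Icc hm, sum_insert (by simp)] at h
  push_cast at h
  linarith

lemma prod_Icc_one_add_div_le_rpow {A : ℝ} (hA : 0 ≤ A) {a m n : ℕ} (ha : 2 ≤ a) (hmn : m ≤ n)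
    (hn : n ≠ 0) : ∏ j ∈ Icc a m, (1 + A / j) ≤ (n : ℝ) ^ A := by
  have hsum : ∑ j ∈ Icc a m, (j : ℝ)⁻¹ ≤ log n :=
    (sum_le_sum_of_subset_of_nonneg (Icc_subset_Icc ha hmn) fun _ _ _ ↦ by positivity).trans
      (sum_Icc_two_inv_le_log n)
  calc ∏ j ∈ Icc a m, (1 + A / j)
      ≤ ∏ j ∈ Icc a m, exp (A / j) :=
        prod_le_prod (fun _ _ ↦ by positivity) fun j _ ↦ by linarith [add_one_le_exp (A / j)]
    _ = exp (A * ∑ j ∈ Icc a m, (j : ℝ)⁻¹) := by simp only [← exp_sum, mul_sum, div_eq_mul_inv]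
    _ ≤ exp (log n * A) := by rw [mul_comm (log _)]; gcongr
    _ = (n : ℝ) ^ A := (rpow_def_of_pos (by positivity) A).symm

lemma prod_add_sum_one_div_rpow_mul_prod_le {A p : ℝ} (hA : 0 ≤ A) (hp : 1 < p) (n : ℕ)
    (hn : n ≠ 0) :
    (∏ j ∈ Icc 2 (n - 1), (1 + A / (j : ℝ))) +
        ∑ i ∈ Icc 2 (n - 1), 1 / (i : ℝ) ^ p * ∏ j ∈ Icc (i + 1) (n - 1), (1 + A / (j : ℝ)) ≤
      (1 + ∑' i : ℕ, 1 / (i : ℝ) ^ p) * (n : ℝ) ^ A := by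
  have hprod {a : ℕ} (ha : 2 ≤ a) : ∏ j ∈ Icc a (n - 1), (1 + A / (j : ℝ)) ≤ (n : ℝ) ^ A :=
    prod_Icc_one_add_div_le_rpow hA ha (n.sub_le 1) hn
  have hsum : ∑ i ∈ Icc 2 (n - 1), 1 / (i : ℝ) ^ p * ∏ j ∈ Icc (i + 1) (n - 1), (1 + A / (j : ℝ))
      ≤ (∑' i : ℕ, 1 / (i : ℝ) ^ p) * (n : ℝ) ^ A :=
    calc _ ≤ ∑ i ∈ Icc 2 (n - 1), 1 / (i : ℝ) ^ p * (n : ℝ) ^ A :=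
          sum_le_sum fun i hi ↦ by
            gcongr
            exact hprod (by linarith [(mem_Icc.mp hi).1])
      _ = (∑ i ∈ Icc 2 (n - 1), 1 / (i : ℝ) ^ p) * (n : ℝ) ^ A := (sum_mul ..).symm
      _ ≤ _ := by
          gcongr
          exact (summable_one_div_nat_rpow.mpr hp).sum_le_tsum _ fun _ _ ↦ by positivity
  linarith [hprod le_rfl]

theorem error_factor_bound_general (A α : ℝ) (hA : 0 < A) (hα1 : α < 1) :
    ∃ C : ℝ, 0 < C ∧ ∀ n : ℕ, 2 ≤ n →
      1 + A * (n : ℝ) ^ (1 - α) *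
        ((∏ j ∈ Finset.Icc 2 (n - 1), (1 + A / (j : ℝ))) +
          ∑ i ∈ Finset.Icc 2 (n - 1),
            1 / (i : ℝ) ^ (2 - α) *
              ∏ j ∈ Finset.Icc (i + 1) (n - 1), (1 + A / (j : ℝ))) ≤
      C * (n : ℝ) ^ (1 - α + A) := by
  set S := ∑' i : ℕ, 1 / (i : ℝ) ^ (2 - α)
  have hS : 0 ≤ S := tsum_nonneg fun _ ↦ by positivity
  refine ⟨1 + A * (1 + S), by positivity, fun n hn ↦ ?_⟩
  have hn0 : (0 : ℝ) < n := by positivity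
  have hbracket := prod_add_sum_one_div_rpow_mul_prod_le hA.le (p := 2 - α) (by linarith) n
    (by positivity)
  have hpow : 1 ≤ (n : ℝ) ^ (1 - α + A) :=
    one_le_rpow (by exact_mod_cast (by omega : 1 ≤ n)) (by linarith)
  calc 1 + A * (n : ℝ) ^ (1 - α) * _
      ≤ 1 + A * (n : ℝ) ^ (1 - α) * ((1 + S) * (n : ℝ) ^ A) := by gcongr
    _ = 1 + A * (1 + S) * (n : ℝ) ^ (1 - α + A) := by rw [rpow_add hn0]; ring
    _ ≤ (1 + A * (1 + S)) * (n : ℝ) ^ (1 - α + A) := by nlinarith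

theorem error_factor_bound (A α : ℝ) (hA : 0 < A) (hα0 : 0 < α) (hα1 : α < 1) :
    ∃ C : ℝ, 0 < C ∧ ∀ n : ℕ, 2 ≤ n →
      1 + A * (n : ℝ) ^ (1 - α) *
        ((∏ j ∈ Finset.Icc 2 (n - 1), (1 + A / (j : ℝ))) +
          ∑ i ∈ Finset.Icc 2 (n - 1),
            1 / (i : ℝ) ^ (2 - α) *
              ∏ j ∈ Finset.Icc (i + 1) (n - 1), (1 + A / (j : ℝ))) ≤
      C * (n : ℝ) ^ (1 - α + A) :=
  error_factor_bound_general A α hA hα1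
end

section
/- Let $0 < \alpha < 1$ and $m > 1$. Define $C_2 = \Gamma(3-\alpha)^{-1/(m+1)}$ and $C_1$ as in the lower-bound constant: for $1 - \frac{1}{m+1} < \alpha < 1$, $C_1 = \left(\left(\frac{\alpha}{2}\right)^{2-\alpha}\frac{\Gamma(1 + \frac{2-\alpha}{m})}{\Gamma(2-\alpha+\frac{2-\alpha}{m})}\frac{1}{2-\alpha}\right)^{1/(m+1)}$. Then $0 < C_1 \le C_2$. -/
set_option maxHeartbeats 1000000


open Real Set

private lemma myGamma_two : Real.Gamma 2 = 1 := by
  rw [show (2:ℝ) = (1:ℕ) + 1 by norm_num, Real.Gamma_nat_eq_factorial]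
  norm_num

private lemma myGamma_three : Real.Gamma 3 = 2 := by
  rw [show (3:ℝ) = (2:ℕ) + 1 by norm_num, Real.Gamma_nat_eq_factorial]
  norm_num

private lemma gamma_ge_third {t : ℝ} (ht : 1 ≤ t) : 1/3 ≤ Real.Gamma t := by
  rcases eq_or_lt_of_le ht with h1 | h1
  · rw [← h1, Real.Gamma_one]; norm_num
  rcases le_or_gt 2 t with h2 | h2
  · have hmono := Real.Gamma_strictMonoOn_Ici.monotoneOn (by norm_num : (2:ℝ) ∈ Ici 2)
      (mem_Ici.mpr h2) h2
    rw [myGamma_two] at hmono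
    linarith
  rcases le_or_gt (7/5) t with h3 | h3
  · have hs := Real.convexOn_Gamma.slope_mono_adjacent
      (show t ∈ Ioi (0:ℝ) by exact mem_Ioi.mpr (by linarith))
      (show (3:ℝ) ∈ Ioi 0 by norm_num) h2 (by norm_num : (2:ℝ) < 3)
    rw [myGamma_two, myGamma_three] at hs
    have h4 : (0:ℝ) < 2 - t := by linarith
    rw [div_le_div_iff₀ h4 (by norm_num : (0:ℝ) < 3 - 2)] at hs
    nlinarith
  · have hs := Real.convexOn_Gamma.slope_mono_adjacent
      (show (1/2:ℝ) ∈ Ioi 0 by norm_num)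
      (show t ∈ Ioi (0:ℝ) by exact mem_Ioi.mpr (by linarith))
      (by norm_num : (1/2:ℝ) < 1) h1
    rw [Real.Gamma_one, Real.Gamma_one_half_eq] at hs
    have hπ : Real.sqrt π ≤ 11/6 := by
      rw [show (11/6:ℝ) = Real.sqrt ((11/6)^2) by
        rw [Real.sqrt_sq (by norm_num : (0:ℝ) ≤ 11/6)]]
      exact Real.sqrt_le_sqrt (by nlinarith [Real.pi_lt_d2])
    have h4 : (0:ℝ) < t - 1 := by linarith
    rw [div_le_div_iff₀ (by norm_num : (0:ℝ) < 1 - 1/2) h4] at hs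
    nlinarith

private lemma gamma_le_one {t : ℝ} (h1 : 1 ≤ t) (h2 : t ≤ 2) : Real.Gamma t ≤ 1 := by
  have hc := Real.convexOn_Gamma.2 (show (1:ℝ) ∈ Ioi 0 by norm_num)
    (show (2:ℝ) ∈ Ioi 0 by norm_num)
    (show (0:ℝ) ≤ 2 - t by linarith) (show (0:ℝ) ≤ t - 1 by linarith) (by ring)
  simp only [smul_eq_mul] at hc
  rw [show (2 - t) * (1:ℝ) + (t - 1) * 2 = t by ring, Real.Gamma_one, myGamma_two] at hc
  linarith

theorem constants_ordered (α m : ℝ)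
    (hα1 : 1 - 1 / (m + 1) < α) (hα2 : α < 1) (hm : 1 < m) :
    0 < (((α / 2) ^ (2 - α) *
          (Real.Gamma (1 + (2 - α) / m) / Real.Gamma (2 - α + (2 - α) / m)) *
          (1 / (2 - α))) ^ (1 / (m + 1))) ∧
    (((α / 2) ^ (2 - α) *
        (Real.Gamma (1 + (2 - α) / m) / Real.Gamma (2 - α + (2 - α) / m)) *
        (1 / (2 - α))) ^ (1 / (m + 1))) ≤
      Real.Gamma (3 - α) ^ (-(1 / (m + 1))) := by
  have hm0 : (0:ℝ) < m := by linarith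
  have hm1 : (0:ℝ) < m + 1 := by linarith
  have hα0 : 0 < α := by
    have : 1 / (m + 1) < 1 := by
      rw [div_lt_one hm1]; linarith
    linarith
  have h2α : (1:ℝ) < 2 - α := by linarith
  have h2α0 : (0:ℝ) < 2 - α := by linarith
  -- abbreviations
  set β : ℝ := (2 - α) / m with hβdef
  have hβ0 : 0 < β := div_pos h2α0 hm0
  have hs0 : 0 < 1 - α := by linarith
  -- m * (1 - α) < 1
  have hms : m * (1 - α) < 1 := by
    have h1 : (1 - α) * (m + 1) < 1 := by
      rw [← lt_div_iff₀ hm1]; linarith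
    nlinarith
  -- Gamma values
  have hGx : 0 < Real.Gamma (1 + β) := Real.Gamma_pos_of_pos (by linarith)
  have hGg : 0 < Real.Gamma (2 - α + β) := Real.Gamma_pos_of_pos (by linarith)
  have hGg3 : 1/3 ≤ Real.Gamma (2 - α + β) := gamma_ge_third (by linarith)
  -- base positivity
  have hbase : 0 < (α / 2) ^ (2 - α) *
      (Real.Gamma (1 + β) / Real.Gamma (2 - α + β)) * (1 / (2 - α)) := by
    have h1 : (0:ℝ) < (α/2) ^ (2-α) := Real.rpow_pos_of_pos (by linarith) _
    positivity
  constructor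
  · exact Real.rpow_pos_of_pos hbase _
  -- main inequality
  have hG3 : Real.Gamma (3 - α) = (2 - α) * Real.Gamma (2 - α) := by
    rw [show (3 - α) = (2 - α) + 1 by ring, Real.Gamma_add_one (by linarith)]
  have hG3pos : 0 < Real.Gamma (3 - α) := Real.Gamma_pos_of_pos (by linarith)
  -- λ
  set lam : ℝ := (1 - α) / (β + (1 - α)) with hlamdef
  have hβs : 0 < β + (1 - α) := by linarith
  have hlam0 : 0 ≤ lam := le_of_lt (div_pos hs0 hβs)
  have hlam1 : lam ≤ 1 := by
    rw [hlamdef, div_le_one hβs]; linarith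
  have hlameq : lam * (β + (1 - α)) = 1 - α :=
    div_mul_cancel₀ _ (ne_of_gt hβs)
  -- convexity bound: Γ(1+β) ≤ lam + (1-lam) * Γ(2-α+β)
  have hconv : Real.Gamma (1 + β) ≤ lam * 1 + (1 - lam) * Real.Gamma (2 - α + β) := by
    have hc := Real.convexOn_Gamma.2 (show (1:ℝ) ∈ Ioi 0 by norm_num)
      (show (2 - α + β) ∈ Ioi (0:ℝ) by exact mem_Ioi.mpr (by linarith))
      hlam0 (show (0:ℝ) ≤ 1 - lam by linarith) (show lam + (1 - lam) = 1 by ring)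
    simp only [smul_eq_mul] at hc
    rw [show lam * 1 + (1 - lam) * (2 - α + β) = 1 + β by nlinarith [hlameq]] at hc
    rw [Real.Gamma_one] at hc
    linarith
  -- ratio bound
  have hratio : Real.Gamma (1 + β) / Real.Gamma (2 - α + β) ≤ 1 + 2 * lam := by
    rw [div_le_iff₀ hGg]
    nlinarith
  -- rpow bound
  have hpow : (α / 2) ^ (2 - α) ≤ α / 2 := by
    have := Real.rpow_le_rpow_of_exponent_ge (by linarith : 0 < α/2)
      (by linarith : α/2 ≤ 1) (by linarith : (1:ℝ) ≤ 2 - α)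
    rwa [Real.rpow_one] at this
  have hG2le : Real.Gamma (2 - α) ≤ 1 := gamma_le_one (by linarith) (by linarith)
  have hG2pos : 0 < Real.Gamma (2 - α) := Real.Gamma_pos_of_pos h2α0
  -- arithmetic: (α/2) * (1 + 2*lam) ≤ 1
  have harith : (α / 2) * (1 + 2 * lam) ≤ 1 := by
    have hβm : β * m = 2 - α := by
      rw [hβdef]; field_simp
    nlinarith [hlameq, hβ0, hs0, hms, hα0, hα2]
  -- combine
  have hkey : (α / 2) ^ (2 - α) *
      (Real.Gamma (1 + β) / Real.Gamma (2 - α + β)) * (1 / (2 - α)) ≤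
      (Real.Gamma (3 - α))⁻¹ := by
    rw [inv_eq_one_div, le_div_iff₀ hG3pos, hG3]
    have hrat0 : 0 ≤ Real.Gamma (1 + β) / Real.Gamma (2 - α + β) :=
      le_of_lt (div_pos hGx hGg)
    have hpow0 : 0 ≤ (α / 2) ^ (2 - α) :=
      le_of_lt (Real.rpow_pos_of_pos (by linarith) _)
    have heq : (α / 2) ^ (2 - α) *
        (Real.Gamma (1 + β) / Real.Gamma (2 - α + β)) * (1 / (2 - α)) *
        ((2 - α) * Real.Gamma (2 - α)) =
        ((α / 2) ^ (2 - α)) * (Real.Gamma (1 + β) / Real.Gamma (2 - α + β)) *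
        Real.Gamma (2 - α) := by
      field_simp
    rw [heq]
    calc ((α / 2) ^ (2 - α)) * (Real.Gamma (1 + β) / Real.Gamma (2 - α + β)) *
          Real.Gamma (2 - α)
        ≤ (α / 2) * (1 + 2 * lam) * 1 := by
          apply mul_le_mul
          · apply mul_le_mul hpow hratio hrat0 (by linarith)
          · exact hG2le
          · exact le_of_lt hG2pos
          · positivity
      _ ≤ 1 := by linarith [harith]
  -- finish via rpow monotonicity
  have hexp0 : (0:ℝ) ≤ 1 / (m + 1) := by positivity
  calc ((α / 2) ^ (2 - α) *
        (Real.Gamma (1 + β) / Real.Gamma (2 - α + β)) * (1 / (2 - α))) ^ (1 / (m + 1))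
      ≤ ((Real.Gamma (3 - α))⁻¹) ^ (1 / (m + 1)) :=
        Real.rpow_le_rpow (le_of_lt hbase) hkey hexp0
    _ = Real.Gamma (3 - α) ^ (-(1 / (m + 1))) := by
        rw [Real.rpow_neg (le_of_lt hG3pos), Real.inv_rpow (le_of_lt hG3pos)]
end
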